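/- arXiv:0812.2613 — 9 statements merged into one kernel-verified Lean document; each statement's English description precedes it below -/
import Mathlib

section
/- If B is a generating subset of a finite abelian group G of rank r, then the subset-sum set B* = {∑_{a∈A} a : A ⊆ B} satisfies |B*| ≥ 2^r. -/
/-!
Shrink `B` to a minimal subset `S` that still generates `G`. Then no `a ∈ S` lies in the subgroup
generated by `S \ {a}`, and this forces the `2 ^ |S|` subset sums of `S` to be pairwise distinct:
if `∑ A = ∑ A'` with `a ∈ A \ A'`, then `a = ∑ A' - ∑ (A \ {a})` is a combination of
`S \ {a}`. Hence `|B*| ≥ |S*| = 2 ^ |S| ≥ 2 ^ r`.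
-/

open Finset Pointwise

/-- The subset-sum set of a finite set `B`: all sums `∑_{a ∈ A} a` over `A ⊆ B`. -/
def subsetSums {G : Type*} [AddCommMonoid G] [DecidableEq G] (B : Finset G) : Finset G :=
  B.powerset.image fun A => A.sum id

section

variable {G : Type*} [AddCommGroup G] [DecidableEq G]

theorem subsetSums_mono {A B : Finset G} (h : A ⊆ B) : subsetSums A ⊆ subsetSums B :=
  image_subset_image (powerset_mono.mpr h)

theorem mem_closure_erase_of_sum_eq {S A A' : Finset G} (hA : A ⊆ S) (hA' : A' ⊆ S)
    (hsum : A.sum id = A'.sum id) {a : G} (ha : a ∈ A) (ha' : a ∉ A') :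
    a ∈ AddSubgroup.closure (S.erase a : Set G) := by
  have hA'_sub : A' ⊆ S.erase a := fun x hx =>
    mem_erase.mpr ⟨fun hxa => ha' (hxa ▸ hx), hA' hx⟩
  have hA_sub : A.erase a ⊆ S.erase a := erase_subset_erase a hA
  have ha_eq : a = A'.sum id - (A.erase a).sum id :=
    eq_sub_of_add_eq ((add_sum_erase A id ha).trans hsum)
  have hmem : A'.sum id - (A.erase a).sum id ∈ AddSubgroup.closure (S.erase a : Set G) :=
    sub_mem (AddSubgroup.sum_mem _ fun x hx => AddSubgroup.subset_closure (hA'_sub hx))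
      (AddSubgroup.sum_mem _ fun x hx => AddSubgroup.subset_closure (hA_sub hx))
  rwa [← ha_eq] at hmem

theorem card_subsetSums_of_notMem_closure_erase {S : Finset G}
    (hS : ∀ a ∈ S, a ∉ AddSubgroup.closure (S.erase a : Set G)) :
    (subsetSums S).card = 2 ^ S.card := by
  have hinj : Set.InjOn (fun A : Finset G => A.sum id) S.powerset := by
    intro A hA A' hA' hsum
    simp only [coe_powerset, Set.mem_preimage, Set.mem_powerset_iff, coe_subset] at hA hA'
    ext a
    constructor
    · intro ha
      by_contra ha'
      exact hS a (hA ha) (mem_closure_erase_of_sum_eq hA hA' hsum ha ha')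
    · intro ha
      by_contra ha'
      exact hS a (hA' ha) (mem_closure_erase_of_sum_eq hA' hA hsum.symm ha ha')
  rw [subsetSums, card_image_of_injOn hinj, card_powerset]

theorem AddSubgroup.closure_erase_of_mem_closure_erase {S : Finset G} {a : G}
    (ha : a ∈ AddSubgroup.closure (S.erase a : Set G)) :
    AddSubgroup.closure (S.erase a : Set G) = AddSubgroup.closure (S : Set G) := by
  refine le_antisymm (AddSubgroup.closure_mono (by simp)) (AddSubgroup.closure_le _ |>.mpr ?_)
  intro x hx
  by_cases hxa : x = a
  · exact hxa ▸ ha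
  · exact AddSubgroup.subset_closure (by simpa [hxa] using hx)

theorem exists_subset_closure_eq_notMem_closure_erase (B : Finset G) :
    ∃ S ⊆ B, AddSubgroup.closure (S : Set G) = AddSubgroup.closure (B : Set G) ∧
      ∀ a ∈ S, a ∉ AddSubgroup.closure (S.erase a : Set G) := by
  obtain ⟨S, hSB, hmin⟩ := exists_minimal_le_of_wellFoundedLT
    (fun S : Finset G => AddSubgroup.closure (S : Set G) = AddSubgroup.closure (B : Set G)) B rfl
  refine ⟨S, hSB, hmin.prop, fun a haS ha => ?_⟩
  have hgen : AddSubgroup.closure (S.erase a : Set G) = AddSubgroup.closure (B : Set G) :=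
    (AddSubgroup.closure_erase_of_mem_closure_erase ha).trans hmin.prop
  exact (erase_ssubset haS).not_ge (hmin.le_of_le hgen (erase_subset a S))

end

theorem stmt0_general {G : Type*} [AddCommGroup G] [DecidableEq G]
    (r : ℕ)
    (hr : IsLeast {n : ℕ | ∃ S : Finset G, S.card = n ∧
            AddSubgroup.closure (S : Set G) = ⊤} r)
    (B : Finset G) (hB : AddSubgroup.closure (B : Set G) = ⊤) :
    2 ^ r ≤ (subsetSums B).card := by
  obtain ⟨S, hSB, hSgen, hS⟩ := exists_subset_closure_eq_notMem_closure_erase B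
  have hrS : r ≤ S.card := hr.2 ⟨S, rfl, hSgen.trans hB⟩
  calc 2 ^ r ≤ 2 ^ S.card := Nat.pow_le_pow_right two_pos hrS
    _ = (subsetSums S).card := (card_subsetSums_of_notMem_closure_erase hS).symm
    _ ≤ (subsetSums B).card := card_le_card (subsetSums_mono hSB)

theorem stmt0 {G : Type*} [AddCommGroup G] [Fintype G] [DecidableEq G]
    (r : ℕ)
    (hr : IsLeast {n : ℕ | ∃ S : Finset G, S.card = n ∧
            AddSubgroup.closure (S : Set G) = ⊤} r)
    (B : Finset G) (hB : AddSubgroup.closure (B : Set G) = ⊤) :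
    2 ^ r ≤ (subsetSums B).card :=
  stmt0_general r hr B hB
end

section
/- Let G be a finite abelian group of exponent m, and let B ⊆ G be a generating subset. Then the (m−1)-fold sumset of B* equals G, i.e., (m−1)B* = G. -/
open Finset Pointwise

/-! In a group of exponent `m` generated by `B`, every element is `∑_{b ∈ B} c_b • b` with
`0 ≤ c_b ≤ m - 1`, since `m • b = 0`. Such a sum is the sum of the `m - 1` layers
`∑_{b ∈ B, i < c_b} b` (`i < m - 1`), each of which is a subset sum. -/

section

variable {G : Type*}

theorem sum_mem_subsetSums [AddCommMonoid G] [DecidableEq G] {A B : Finset G} (h : A ⊆ B) :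
    ∑ a ∈ A, a ∈ subsetSums B :=
  mem_image.2 ⟨A, mem_powerset.2 h, rfl⟩

theorem sum_nsmul_mem_sum_subsetSums [AddCommMonoid G] [DecidableEq G] (B : Finset G) {k : ℕ}
    {c : G → ℕ} (hc : ∀ b ∈ B, c b ≤ k) :
    ∑ b ∈ B, c b • b ∈ ∑ _i : Fin k, subsetSums B := by
  have layers : ∑ b ∈ B, c b • b = ∑ i : Fin k, ∑ b ∈ B with ↑i < c b, b := by
    simp_rw [sum_filter]
    rw [sum_comm]
    refine sum_congr rfl fun b hb => ?_
    rw [← sum_filter, sum_const, Fin.card_filter_val_lt, min_eq_right (hc b hb)]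
  rw [layers, ← mem_coe, coe_sum]
  exact Set.finsetSum_mem_finsetSum _ _ _ fun i _ => sum_mem_subsetSums (filter_subset _ _)

theorem AddSubgroup.exists_sum_nsmul_eq_of_mem_closure [AddCommGroup G]
    (hG : AddMonoid.ExponentExists G) {B : Finset G} {g : G}
    (hg : g ∈ AddSubgroup.closure (B : Set G)) :
    ∃ c : G → ℕ, (∀ b, c b < AddMonoid.exponent G) ∧ ∑ b ∈ B, c b • b = g := by
  rw [← AddSubgroup.mem_toAddSubmonoid,
    AddSubgroup.closure_toAddSubmonoid_of_isOfFinAddOrder fun _ _ => hG.isOfFinAddOrder] at hg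
  obtain ⟨f, -, rfl⟩ := AddSubmonoid.mem_closure_finset.1 hg
  exact ⟨fun b => f b % AddMonoid.exponent G,
    fun b => Nat.mod_lt _ (AddMonoid.exponent_pos.2 hG),
    sum_congr rfl fun b _ => (nsmul_eq_mod_nsmul _ (AddMonoid.exponent_nsmul_eq_zero b)).symm⟩

end

theorem stmt3 {G : Type*} [AddCommGroup G] [Fintype G] [DecidableEq G]
    (m : ℕ) (hm : AddMonoid.exponent G = m)
    (B : Finset G) (hB : AddSubgroup.closure (B : Set G) = ⊤) :
    (∑ _i : Fin (m - 1), subsetSums B) = Finset.univ := by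
  refine eq_univ_of_forall fun g => ?_
  obtain ⟨c, hc, rfl⟩ := AddSubgroup.exists_sum_nsmul_eq_of_mem_closure
    .of_finite (hB ▸ AddSubgroup.mem_top g)
  exact sum_nsmul_mem_sum_subsetSums B fun b _ => Nat.le_sub_one_of_lt (hm ▸ hc b)
end

section
/- Let G be a finite non-trivial abelian group of exponent m, and let B_1, …, B_k be generating subsets of G. If k > 2·m·ln(log₂|G|), then B₁* + ⋯ + B_k* = G; equivalently, every element g ∈ G can be written as g = ∑_{i=1}^k ∑_{a∈A_i} a for some subsets A_i ⊆ B_i. -/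
open Finset Pointwise

/-!
Write `X_s = ∑_{i ∈ s} B_i*`. Every element of `G` is a combination of a generating set `B` with
coefficients below `m`, so `(m - 1) • B* = G`, and Plünnecke–Ruzsa for `X` and `B*` gives
`|G| ≤ (|X + B*| / |X|) ^ (m - 1) * |X|`. Thus each new summand multiplies `log (|G| / |X|)` by at
most `1 - 1 / (m - 1) ≤ exp (-1 / (m - 1))`, and once `|s| > (m - 1) ln log₂ |G|` we get
`|X_s| > |G| / 2`. Two disjoint such blocks of indices then cover `G` by pigeonhole; for `|G| ≥ 4`
the bound on `k` leaves room for both. For `|G| ≤ 3` a stabiliser argument shows instead that each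
summand strictly enlarges `X_s` until it is all of `G`.
-/

open Real

section AddCommMonoid

variable {M ι : Type*} [AddCommMonoid M] [DecidableEq M]

lemma subsetSums_eq_subsetSum (B : Finset M) : subsetSums B = B.subsetSum := rfl

lemma sum_nsmul_mem_nsmul_subsetSum (B : Finset M) :
    ∀ {h : ℕ} {c : M → ℕ}, (∀ b ∈ B, c b ≤ h) → ∑ b ∈ B, c b • b ∈ h • B.subsetSum
  | 0, c, hc => by
    rw [sum_eq_zero fun b hb => by rw [Nat.le_zero.1 (hc b hb), zero_nsmul], zero_nsmul]
    exact mem_zero.2 rfl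
  | h + 1, c, hc => by
    have peel : ∑ b ∈ B, c b • b = ∑ b ∈ B, min (c b) h • b + ∑ b ∈ B with h < c b, b := by
      rw [sum_filter, ← sum_add_distrib]
      refine sum_congr rfl fun b hb => ?_
      split_ifs with hlt
      · rw [min_eq_right hlt.le, ← succ_nsmul, show c b = h + 1 by have := hc b hb; omega]
      · rw [min_eq_left (not_lt.1 hlt), add_zero]
    rw [peel, succ_nsmul]
    exact add_mem_add (sum_nsmul_mem_nsmul_subsetSum B fun b _ => min_le_right _ _)
      (mem_subsetSum_iff.2 ⟨_, filter_subset _ _, rfl⟩)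

lemma zero_mem_sum_subsetSum (B : ι → Finset M) (s : Finset ι) :
    (0 : M) ∈ ∑ i ∈ s, (B i).subsetSum :=
  sum_induction _ (fun X => (0 : M) ∈ X) (fun _ _ hX hY => by simpa using add_mem_add hX hY)
    (mem_zero.2 rfl) fun _ _ => zero_mem_subsetSum

lemma sum_subsetSum_mono [DecidableEq ι] {B : ι → Finset M} {s t : Finset ι} (hst : s ⊆ t) :
    ∑ i ∈ s, (B i).subsetSum ⊆ ∑ i ∈ t, (B i).subsetSum := by
  rw [← sum_sdiff hst]
  exact subset_add_right _ (zero_mem_sum_subsetSum B _)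

end AddCommMonoid

lemma pow_one_sub_inv_mul_log_lt_log_two {h x : ℝ} (hh : 1 ≤ h) (hx : 1 < x) {t : ℕ}
    (ht : h * log (logb 2 x) < t) : (1 - 1 / h) ^ t * log x < log 2 := by
  have hL : 0 < logb 2 x := logb_pos one_lt_two hx
  have hdecay : (1 - 1 / h) ^ t ≤ exp (-(t / h)) := by
    calc (1 - 1 / h) ^ t ≤ exp (-(1 / h)) ^ t :=
          pow_le_pow_left₀ (by rw [sub_nonneg]; exact div_le_one_of_le₀ hh (by linarith))
            (by linarith [add_one_le_exp (-(1 / h))]) t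
      _ = exp (-(t / h)) := by rw [← exp_nat_mul]; ring_nf
  have hL' : logb 2 x < exp (t / h) := by
    rw [← log_lt_iff_lt_exp hL, lt_div_iff₀ (by linarith)]
    linarith
  calc (1 - 1 / h) ^ t * log x = (1 - 1 / h) ^ t * logb 2 x * log 2 := by
        rw [logb, mul_assoc, div_mul_cancel₀ _ (log_pos one_lt_two).ne']
    _ ≤ exp (-(t / h)) * logb 2 x * log 2 := by gcongr
    _ < exp (-(t / h)) * exp (t / h) * log 2 := by gcongr
    _ = log 2 := by rw [← exp_add, neg_add_cancel, exp_zero, one_mul]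

lemma two_mul_floor_add_one_le {a b : ℝ} {k : ℕ} (ha : 0 ≤ a) (hb : 1 / 2 ≤ b)
    (hk : 2 * (a + 1) * b < k) : 2 * (⌊a * b⌋₊ + 1) ≤ k := by
  have hfloor := Nat.floor_le (mul_nonneg ha (by linarith : (0 : ℝ) ≤ b))
  have : 2 * ⌊a * b⌋₊ + 1 < k := by
    exact_mod_cast (show (2 * ⌊a * b⌋₊ + 1 : ℝ) < k by nlinarith)
  omega

lemma one_quarter_le_log_logb_two_three : 1 / 4 ≤ log (logb 2 3) := by
  have h32 : 3 / 2 ≤ logb 2 3 := by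
    have h89 : log (2 ^ 3) ≤ log (3 ^ 2) := log_le_log (by norm_num) (by norm_num)
    rw [log_pow, log_pow] at h89
    rw [logb, le_div_iff₀ (log_pos one_lt_two)]
    push_cast at h89
    linarith
  calc (1 : ℝ) / 4 ≤ 1 - (3 / 2)⁻¹ := by norm_num
    _ ≤ log (3 / 2) := one_sub_inv_le_log_of_pos (by norm_num)
    _ ≤ log (logb 2 3) := log_le_log (by norm_num) h32

lemma one_half_le_log_logb_two {x : ℝ} (hx : 4 ≤ x) : 1 / 2 ≤ log (logb 2 x) := by
  have h2 : 2 ≤ logb 2 x := by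
    rw [le_logb_iff_rpow_le one_lt_two (by linarith)]
    norm_num
    exact hx
  calc (1 : ℝ) / 2 ≤ log 2 := by linarith [log_two_gt_d9]
    _ ≤ log (logb 2 x) := log_le_log two_pos h2

lemma le_add_one_of_mul_log_logb_two_lt {c : ℝ} {n k : ℕ} (hc : 4 ≤ c) (hn2 : 2 ≤ n)
    (hn3 : n ≤ 3) (hk : c * log (logb 2 n) < k) : n ≤ k + 1 := by
  have : (n : ℝ) - 2 ≤ c * log (logb 2 n) := by
    interval_cases n
    · norm_num
    · norm_num
      nlinarith [one_quarter_le_log_logb_two_three]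
  have : n < k + 2 := by exact_mod_cast (show (n : ℝ) < k + 2 by linarith)
  omega

section FiniteGroup

variable {G : Type*} [AddCommGroup G] [Fintype G] [DecidableEq G]

lemma nsmul_subsetSum_eq_univ {B : Finset G} (hB : AddSubgroup.closure (B : Set G) = ⊤) :
    (AddMonoid.exponent G - 1) • B.subsetSum = univ := by
  refine eq_univ_of_forall fun g => ?_
  have hg : g ∈ AddSubmonoid.closure (B : Set G) := by
    rw [← AddSubgroup.closure_toAddSubmonoid_of_finite, hB]; trivial
  obtain ⟨c, -, rfl⟩ := AddSubmonoid.mem_closure_finset.1 hg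
  rw [sum_congr rfl fun b _ => AddMonoid.nsmul_eq_mod_exponent b]
  exact sum_nsmul_mem_nsmul_subsetSum B fun b _ =>
    Nat.le_sub_one_of_lt (Nat.mod_lt _ (Nat.pos_of_ne_zero AddMonoid.exponent_ne_zero_of_finite))

lemma eq_univ_of_add_subset {B X : Finset G} (hB : AddSubgroup.closure (B : Set G) = ⊤)
    (hX : X.Nonempty) (hBX : B + X ⊆ X) : X = univ := by
  have hstab : AddSubgroup.closure (B : Set G) ≤ AddAction.stabilizer G X := by
    rw [AddSubgroup.closure_le]
    intro b hb
    exact eq_of_subset_of_card_le ((vadd_finset_subset_add hb).trans hBX)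
      (card_vadd_finset b X).ge
  obtain ⟨x, hx⟩ := hX
  refine eq_univ_of_forall fun g => ?_
  have hgx : (g - x) +ᵥ X = X := by
    rw [← AddAction.mem_stabilizer_iff]
    exact hstab (hB ▸ AddSubgroup.mem_top _)
  rw [← hgx]
  exact mem_vadd_finset.2 ⟨x, hx, sub_add_cancel g x⟩

lemma add_eq_univ_of_card_lt_card_add_card {X Y : Finset G} (h : Fintype.card G < #X + #Y) :
    X + Y = univ := by
  refine eq_univ_of_forall fun g => ?_
  have hcard : #(univ : Finset G) < #X + #(Y.image (g - ·)) := by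
    rwa [card_univ, card_image_of_injective _ sub_right_injective]
  obtain ⟨x, hx⟩ :=
    inter_nonempty_of_card_lt_card_add_card (subset_univ _) (subset_univ _) hcard
  obtain ⟨hxX, hxY⟩ := mem_inter.1 hx
  obtain ⟨y, hy, rfl⟩ := mem_image.1 hxY
  exact mem_add.2 ⟨g - y, hxX, y, hy, sub_add_cancel g y⟩

lemma log_card_div_card_add_le {X S : Finset G} {h : ℕ} (hh : 1 ≤ h) (hX : X.Nonempty)
    (hS : h • S = univ) :
    log (Fintype.card G / #(X + S)) ≤ (1 - 1 / h) * log (Fintype.card G / #X) := by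
  have hPR : (Fintype.card G : ℝ) ≤ (#(X + S) / #X : ℝ) ^ h * #X := by
    have := pluennecke_ruzsa_inequality_nsmul_add hX S h
    rw [hS, card_univ] at this
    have := (NNRat.cast_le (K := ℝ)).2 this
    push_cast at this
    exact this
  have hS0 : S.Nonempty := by
    rw [nonempty_iff_ne_empty]
    rintro rfl
    rw [nsmul_eq_empty.2 ⟨rfl, by omega⟩] at hS
    exact univ_nonempty.ne_empty hS.symm
  have hn : (0 : ℝ) < Fintype.card G := by exact_mod_cast Fintype.card_pos
  have ha : (0 : ℝ) < #X := by exact_mod_cast hX.card_pos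
  have ha' : (0 : ℝ) < #(X + S) := by exact_mod_cast (hX.add hS0).card_pos
  have hlog : log (Fintype.card G) ≤ h * (log #(X + S) - log #X) + log #X := by
    have := log_le_log hn hPR
    rwa [log_mul (by positivity) ha.ne', log_pow, log_div ha'.ne' ha.ne'] at this
  have hh' : (1 : ℝ) ≤ h := by exact_mod_cast hh
  rw [log_div hn.ne' ha'.ne', log_div hn.ne' ha.ne']
  field_simp
  nlinarith

variable {ι : Type*} [DecidableEq ι] {B : ι → Finset G}

lemma min_card_le_card_sum_subsetSum (hB : ∀ i, AddSubgroup.closure (B i : Set G) = ⊤)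
    (s : Finset ι) : min (Fintype.card G) (#s + 1) ≤ #(∑ i ∈ s, (B i).subsetSum) := by
  induction s using Finset.induction_on with
  | empty => simp
  | insert i s hi ih =>
    rw [sum_insert hi, card_insert_of_notMem hi]
    set X := ∑ i ∈ s, (B i).subsetSum
    by_cases hstable : (B i).subsetSum + X = X
    · have hX : X = univ := eq_univ_of_add_subset (hB i) ⟨0, zero_mem_sum_subsetSum B s⟩
        ((add_subset_add_right subset_subsetSum).trans hstable.subset)
      rw [hstable, hX, card_univ]
      exact min_le_left _ _
    · have hgrow : #X < #((B i).subsetSum + X) :=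
        card_lt_card ((subset_add_right X zero_mem_subsetSum).ssubset_of_ne (Ne.symm hstable))
      omega

lemma sum_subsetSum_eq_univ_of_card_le (hB : ∀ i, AddSubgroup.closure (B i : Set G) = ⊤)
    {s : Finset ι} (hs : Fintype.card G ≤ #s + 1) : ∑ i ∈ s, (B i).subsetSum = univ := by
  have := min_card_le_card_sum_subsetSum hB s
  rw [min_eq_left hs] at this
  exact eq_univ_of_card _ (le_antisymm (card_le_univ _) this)

lemma sum_subsetSum_eq_univ_of_forall_card_eq {t : ℕ} {u : Finset ι} (hu : 2 * t ≤ #u)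
    (hbig : ∀ s ⊆ u, #s = t → Fintype.card G < 2 * #(∑ i ∈ s, (B i).subsetSum)) :
    ∑ i ∈ u, (B i).subsetSum = univ := by
  obtain ⟨s₁, hs₁u, hs₁⟩ := exists_subset_card_eq (show t ≤ #u by omega)
  obtain ⟨s₂, hs₂u, hs₂⟩ := exists_subset_card_eq
    (show t ≤ #(u \ s₁) by rw [card_sdiff_of_subset hs₁u]; omega)
  have hcover := add_eq_univ_of_card_lt_card_add_card (X := ∑ i ∈ s₁, (B i).subsetSum)
    (Y := ∑ i ∈ s₂, (B i).subsetSum)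
    (by have := hbig s₁ hs₁u hs₁; have := hbig s₂ (hs₂u.trans sdiff_subset) hs₂; omega)
  rw [← sum_union (disjoint_of_subset_right hs₂u sdiff_disjoint.symm)] at hcover
  exact eq_univ_of_forall fun g =>
    sum_subsetSum_mono (union_subset hs₁u (hs₂u.trans sdiff_subset)) (hcover ▸ mem_univ g)

lemma log_card_div_card_sum_subsetSum_le [Nontrivial G]
    (hB : ∀ i, AddSubgroup.closure (B i : Set G) = ⊤) (s : Finset ι) :
    log (Fintype.card G / #(∑ i ∈ s, (B i).subsetSum)) ≤
      (1 - 1 / ((AddMonoid.exponent G : ℝ) - 1)) ^ #s * log (Fintype.card G) := by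
  have hexp : 1 ≤ AddMonoid.exponent G - 1 := by
    have := AddMonoid.one_lt_exponent (G := G); omega
  have hcast : ((AddMonoid.exponent G - 1 : ℕ) : ℝ) = (AddMonoid.exponent G : ℝ) - 1 := by
    rw [Nat.cast_sub (by omega), Nat.cast_one]
  have hc : (0 : ℝ) ≤ 1 - 1 / ((AddMonoid.exponent G : ℝ) - 1) := by
    rw [sub_nonneg, ← hcast]; exact div_le_one_of_le₀ (by exact_mod_cast hexp) (by positivity)
  induction s using Finset.induction_on with
  | empty => simp
  | insert i s hi ih =>
    rw [sum_insert hi, card_insert_of_notMem hi, add_comm, pow_succ']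
    calc _ ≤ _ := hcast ▸ log_card_div_card_add_le hexp ⟨0, zero_mem_sum_subsetSum B s⟩
          (nsmul_subsetSum_eq_univ (hB i))
      _ ≤ _ := mul_le_mul_of_nonneg_left ih hc
      _ = _ := by ring

lemma card_lt_two_mul_card_sum_subsetSum [Nontrivial G]
    (hB : ∀ i, AddSubgroup.closure (B i : Set G) = ⊤) {s : Finset ι}
    (hs : ((AddMonoid.exponent G : ℝ) - 1) * log (logb 2 (Fintype.card G)) < #s) :
    Fintype.card G < 2 * #(∑ i ∈ s, (B i).subsetSum) := by
  have hexp : (1 : ℝ) ≤ AddMonoid.exponent G - 1 := by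
    have : (2 : ℝ) ≤ AddMonoid.exponent G := by exact_mod_cast AddMonoid.one_lt_exponent
    linarith
  have hX : (0 : ℝ) < #(∑ i ∈ s, (B i).subsetSum) := by
    exact_mod_cast card_pos.2 ⟨0, zero_mem_sum_subsetSum B s⟩
  have hlt := (log_card_div_card_sum_subsetSum_le hB s).trans_lt
    (pow_one_sub_inv_mul_log_lt_log_two hexp (by exact_mod_cast Fintype.one_lt_card) hs)
  rw [log_lt_log_iff (by positivity) two_pos, div_lt_iff₀ hX] at hlt
  exact_mod_cast hlt

end FiniteGroup

theorem stmt4 {G : Type*} [AddCommGroup G] [Fintype G] [DecidableEq G] [Nontrivial G]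
    (m : ℕ) (hm : AddMonoid.exponent G = m)
    (k : ℕ) (B : Fin k → Finset G)
    (hB : ∀ i, AddSubgroup.closure ((B i : Set G)) = ⊤)
    (hk : (k : ℝ) > 2 * m * Real.log (Real.logb 2 (Fintype.card G))) :
    (∑ i, subsetSums (B i)) = Finset.univ := by
  set n := Fintype.card G
  have hm2 : (2 : ℝ) ≤ m := by exact_mod_cast hm ▸ AddMonoid.one_lt_exponent
  have hn2 : 2 ≤ n := Fintype.one_lt_card
  simp only [subsetSums_eq_subsetSum]
  rcases le_or_gt n 3 with hn3 | hn4
  · refine sum_subsetSum_eq_univ_of_card_le hB ?_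
    rw [card_univ, Fintype.card_fin]
    exact le_add_one_of_mul_log_logb_two_lt (by linarith) hn2 hn3 hk
  · refine sum_subsetSum_eq_univ_of_forall_card_eq
      (t := ⌊((m : ℝ) - 1) * log (logb 2 n)⌋₊ + 1) ?_ fun s _ hs => ?_
    · rw [card_univ, Fintype.card_fin]
      exact two_mul_floor_add_one_le (by linarith)
        (one_half_le_log_logb_two (by exact_mod_cast hn4)) (by linarith)
    · refine card_lt_two_mul_card_sum_subsetSum hB ?_
      rw [hs, hm]
      push_cast
      exact Nat.lt_floor_add_one _
end

section
/- Let A₀, A₁, …, A_n be finite non-empty subsets of an abelian group. Then |A₀|^{n−1} · |A₁ + ⋯ + A_n| ≤ |A₀ + A₁| · |A₀ + A₂| ⋯ |A₀ + A_n| (Ruzsa sum triangle inequality, iterated form). -/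
/-!
Embed the problem in `Gⁿ`: the diagonal box `(A₁ + ⋯ + Aₙ)ⁿ` lies in `n • D`, where `D` is the
union of the `n` cyclic shifts of the box `A₁ × ⋯ × Aₙ`, and `A₀ⁿ + D` is covered by `n` boxes, each
of size `∏ |A₀ + Aᵢ|`. The Plünnecke–Ruzsa inequality for `A₀ⁿ` and `D` then gives the theorem up
to a factor `n`, which the tensor power trick (applying this in `(Fin t → G)` and letting `t → ∞`)
removes.
-/

open Finset Pointwise

theorem le_of_forall_pow_le_mul_pow {K : Type*} [Field K] [LinearOrder K] [IsStrictOrderedRing K]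
    [Archimedean K] {x y c : K} (hy : 0 ≤ y) (h : ∀ t : ℕ, x ^ t ≤ c * y ^ t) : x ≤ y := by
  by_contra! hyx
  obtain rfl | hy := hy.eq_or_lt
  · simpa [hyx.not_ge] using h 1
  obtain ⟨t, ht⟩ := pow_unbounded_of_one_lt c ((one_lt_div hy).2 hyx)
  rw [div_pow, lt_div_iff₀ (pow_pos hy t)] at ht
  exact (h t).not_gt ht

theorem Nat.le_of_forall_pow_le_mul_pow {x y c : ℕ} (h : ∀ t : ℕ, x ^ t ≤ c * y ^ t) : x ≤ y := by
  have := _root_.le_of_forall_pow_le_mul_pow (x := (x : ℚ)) (y := y) (c := c) (by positivity)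
    fun t ↦ by exact_mod_cast h t
  exact_mod_cast this

namespace Fintype

variable {ι H : Type*} [Fintype ι] [DecidableEq ι] [AddCommMonoid H] [DecidableEq H]

lemma piFinset_sum {κ : Type*} (s : Finset κ) (F : κ → ι → Finset H) :
    piFinset (fun i ↦ ∑ j ∈ s, F j i) = ∑ j ∈ s, piFinset (F j) := by
  classical
  induction s using Finset.induction_on with
  | empty => exact piFinset_singleton (fun _ : ι ↦ (0 : H))
  | insert a s ha ih => simp only [sum_insert ha, piFinset_add, ih]

end Fintype

open Fintype

namespace Finset

variable {H : Type*} [AddCommGroup H] [DecidableEq H]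

theorem card_nsmul_mul_card_pow_le {B : Finset H} (hB : B.Nonempty) (D : Finset H) (n : ℕ) :
    #(n • D) * #B ^ (n - 1) ≤ #(B + D) ^ n := by
  have := pluennecke_ruzsa_inequality_nsmul_add hB D n
  cases n with
  | zero => simp
  | succ m =>
    rw [Nat.add_sub_cancel]
    suffices (#((m + 1) • D) : ℚ≥0) * #B ^ m ≤ #(B + D) ^ (m + 1) by exact_mod_cast this
    calc (#((m + 1) • D) : ℚ≥0) * #B ^ m ≤ (#(B + D) / #B) ^ (m + 1) * #B * #B ^ m := by gcongr
      _ = #(B + D) ^ (m + 1) := by rw [div_pow, pow_succ (#B : ℚ≥0)]; field_simp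

variable {n : ℕ}

def shiftedBoxes [NeZero n] (A : Fin n → Finset H) : Finset (Fin n → H) :=
  univ.biUnion fun j ↦ piFinset fun i ↦ A (i + j)

lemma piFinset_const_sum_subset_nsmul_shiftedBoxes [NeZero n] (A : Fin n → Finset H) :
    piFinset (fun _ : Fin n ↦ ∑ k, A k) ⊆ n • shiftedBoxes A := by
  have hsum (i : Fin n) : ∑ k, A k = ∑ j, A (i + j) :=
    (Fintype.sum_equiv (Equiv.addLeft i) _ _ fun _ ↦ rfl).symm
  rw [show (fun _ : Fin n ↦ ∑ k, A k) = fun i ↦ ∑ j, A (i + j) from funext hsum, piFinset_sum]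
  calc ∑ j, piFinset (fun i ↦ A (i + j)) ⊆ ∑ _j : Fin n, shiftedBoxes A := by
        rw [← coe_subset, coe_sum, coe_sum]
        exact Set.finsetSum_subset_finsetSum _ _ _ fun j _ ↦
          coe_subset.2 <| subset_biUnion_of_mem (fun j ↦ piFinset fun i ↦ A (i + j)) (mem_univ j)
    _ = n • shiftedBoxes A := by simp

lemma card_piFinset_const_add_shiftedBoxes_le [NeZero n] (B : Finset H) (A : Fin n → Finset H) :
    #(piFinset (fun _ ↦ B) + shiftedBoxes A) ≤ n * ∏ i, #(B + A i) := by
  have hcover : piFinset (fun _ ↦ B) + shiftedBoxes A ⊆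
      univ.biUnion fun j ↦ piFinset fun i ↦ B + A (i + j) := by
    intro x hx
    obtain ⟨b, hb, d, hd, rfl⟩ := mem_add.1 hx
    obtain ⟨j, -, hdj⟩ := mem_biUnion.1 hd
    exact mem_biUnion.2 ⟨j, mem_univ j, by rw [piFinset_add]; exact add_mem_add hb hdj⟩
  have hcard (j : Fin n) : #(piFinset fun i ↦ B + A (i + j)) = ∏ i, #(B + A i) := by
    rw [card_piFinset]
    exact Fintype.prod_equiv (Equiv.addRight j) _ _ fun _ ↦ rfl
  calc _ ≤ _ := card_le_card hcover
    _ ≤ _ := card_biUnion_le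
    _ = n * ∏ i, #(B + A i) := by simp [hcard]

theorem card_sum_mul_card_pow_le_mul_prod [NeZero n] {B : Finset H} (hB : B.Nonempty)
    (A : Fin n → Finset H) :
    #(∑ i, A i) * #B ^ (n - 1) ≤ n * ∏ i, #(B + A i) := by
  refine (Nat.pow_le_pow_iff_left (NeZero.ne n)).1 ?_
  calc (#(∑ i, A i) * #B ^ (n - 1)) ^ n
      = #(piFinset fun _ : Fin n ↦ ∑ i, A i) * #(piFinset fun _ : Fin n ↦ B) ^ (n - 1) := by
        rw [card_piFinset_const, card_piFinset_const, mul_pow, ← pow_mul, ← pow_mul, mul_comm n]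
    _ ≤ #(n • shiftedBoxes A) * #(piFinset fun _ : Fin n ↦ B) ^ (n - 1) := by
        gcongr; exact piFinset_const_sum_subset_nsmul_shiftedBoxes A
    _ ≤ #(piFinset (fun _ ↦ B) + shiftedBoxes A) ^ n :=
        card_nsmul_mul_card_pow_le hB.piFinset_const _ n
    _ ≤ (n * ∏ i, #(B + A i)) ^ n := by
        gcongr; exact card_piFinset_const_add_shiftedBoxes_le B A

theorem card_sum_mul_card_pow_le_prod {B : Finset H} (hB : B.Nonempty) (A : Fin n → Finset H) :
    #(∑ i, A i) * #B ^ (n - 1) ≤ ∏ i, #(B + A i) := by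
  obtain rfl | hn := n.eq_zero_or_pos
  · simp
  have : NeZero n := ⟨hn.ne'⟩
  refine Nat.le_of_forall_pow_le_mul_pow (c := n) fun t ↦ ?_
  have := card_sum_mul_card_pow_le_mul_prod (hB.piFinset_const (ι := Fin t))
    fun i ↦ piFinset fun _ : Fin t ↦ A i
  simpa only [← piFinset_sum, ← piFinset_add, card_piFinset_const, mul_pow, ← pow_mul,
    prod_pow, mul_comm t] using this

end Finset

theorem stmt5_general {G : Type*} [AddCommGroup G] [DecidableEq G]
    (n : ℕ) (A₀ : Finset G) (A : Fin n → Finset G)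
    (h₀ : A₀.Nonempty) :
    A₀.card ^ (n - 1) * (∑ i, A i).card ≤ ∏ i, (A₀ + A i).card := by
  rw [mul_comm]
  exact card_sum_mul_card_pow_le_prod h₀ A

theorem stmt5 {G : Type*} [AddCommGroup G] [DecidableEq G]
    (n : ℕ) (hn : 1 ≤ n) (A₀ : Finset G) (A : Fin n → Finset G)
    (h₀ : A₀.Nonempty) (hA : ∀ i, (A i).Nonempty) :
    A₀.card ^ (n - 1) * (∑ i, A i).card ≤ ∏ i, (A₀ + A i).card :=
  stmt5_general n A₀ A h₀
end

section
/- Let G be a finite abelian group of exponent m ≥ 2, let S be a finite nonempty subset of G, and let B be a generating subset of G. Then |S + B*| ≥ |S|^{1 − 1/(m−1)} · |G|^{1/(m−1)}. -/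
open Finset Pointwise

lemma mem_subsetSums {G : Type*} [AddCommMonoid G] [DecidableEq G] {B A : Finset G}
    (h : A ⊆ B) : A.sum id ∈ subsetSums B :=
  Finset.mem_image.2 ⟨A, Finset.mem_powerset.2 h, rfl⟩

lemma sum_mem_nsmul_subsetSums {G : Type*} [AddCommMonoid G] [DecidableEq G]
    (B : Finset G) : ∀ (n : ℕ) (c : G → ℕ), (∀ b ∈ B, c b ≤ n) →
    (∑ b ∈ B, c b • b) ∈ n • subsetSums B := by
  intro n
  induction n with
  | zero =>
    intro c hc
    have : (∑ b ∈ B, c b • b) = 0 := by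
      apply Finset.sum_eq_zero
      intro b hb
      simp [Nat.le_zero.1 (hc b hb)]
    rw [this, zero_nsmul]
    simp
  | succ n ih =>
    intro c hc
    set A := B.filter (fun b => 1 ≤ c b) with hA
    have hAB : A ⊆ B := Finset.filter_subset _ _
    have key : (∑ b ∈ B, c b • b)
        = (∑ b ∈ B, (c b - 1) • b) + A.sum id := by
      rw [hA, Finset.sum_filter, ← Finset.sum_add_distrib]
      apply Finset.sum_congr rfl
      intro b hb
      rcases Nat.eq_zero_or_pos (c b) with h0 | h1
      · simp [h0]
      · have h1' : 1 ≤ c b := h1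
        have hcb : c b = (c b - 1) + 1 := by omega
        rw [if_pos h1']
        conv_lhs => rw [hcb]
        rw [add_nsmul, one_nsmul]
        rfl
    rw [key, succ_nsmul]
    exact Finset.add_mem_add (ih _ fun b hb => by have := hc b hb; omega)
      (mem_subsetSums hAB)

lemma nsmul_subsetSums_eq_univ {G : Type*} [AddCommGroup G] [Fintype G] [DecidableEq G]
    (m : ℕ) (hm : AddMonoid.exponent G = m) (hm2 : 2 ≤ m)
    (B : Finset G) (hB : AddSubgroup.closure (B : Set G) = ⊤) :
    (m - 1) • subsetSums B = Finset.univ := by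
  apply Finset.eq_univ_of_forall
  intro g
  -- first: g is in the additive submonoid closure of B
  have hmono : (AddSubmonoid.closure (B : Set G) : Set G) = Set.univ := by
    have hsub : AddSubgroup.closure (B : Set G) ≤
        { carrier := AddSubmonoid.closure (B : Set G)
          add_mem' := fun ha hb => add_mem ha hb
          zero_mem' := zero_mem _
          neg_mem' := by
            intro x hx
            have hord : addOrderOf x ≠ 0 := (addOrderOf_pos x).ne'
            have : (addOrderOf x - 1) • x + x = 0 := by
              have : (addOrderOf x - 1) • x + x = addOrderOf x • x := by
                conv_rhs => rw [show addOrderOf x = (addOrderOf x - 1) + 1 by omega]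
                rw [add_nsmul, one_nsmul]
              rw [this, addOrderOf_nsmul_eq_zero]
            rw [(eq_neg_of_add_eq_zero_left this).symm]
            exact nsmul_mem hx _ } := by
      apply AddSubgroup.closure_le _ |>.2
      exact AddSubmonoid.subset_closure
    rw [hB] at hsub
    apply Set.eq_univ_of_forall
    intro x
    exact hsub trivial
  have hg : g ∈ AddSubmonoid.closure (B : Set G) := Set.eq_univ_iff_forall.1 hmono g
  obtain ⟨l, hl, hsum⟩ := AddSubmonoid.exists_multiset_of_mem_closure hg
  -- write g as sum over B of counts
  have hsum' : g = ∑ b ∈ B, (l.count b) • b := by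
    rw [← hsum]
    exact Finset.sum_multiset_count_of_subset l B
      (fun x hx => hl x (Multiset.mem_toFinset.1 hx))
  -- reduce counts mod m
  have hred : g = ∑ b ∈ B, (l.count b % m) • b := by
    rw [hsum']
    apply Finset.sum_congr rfl
    intro b _
    conv_lhs => rw [show l.count b = m * (l.count b / m) + l.count b % m from
      (Nat.div_add_mod _ _).symm]
    have hz : m • b = 0 := hm ▸ AddMonoid.exponent_nsmul_eq_zero b
    rw [add_nsmul, mul_nsmul, hz, nsmul_zero, zero_add]
  rw [hred]
  exact sum_mem_nsmul_subsetSums B (m - 1) _ fun b _ => by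
    have := Nat.mod_lt (l.count b) (show 0 < m by omega); omega

theorem stmt6 {G : Type*} [AddCommGroup G] [Fintype G] [DecidableEq G]
    (m : ℕ) (hm : AddMonoid.exponent G = m) (hm2 : 2 ≤ m)
    (S : Finset G) (hS : S.Nonempty)
    (B : Finset G) (hB : AddSubgroup.closure (B : Set G) = ⊤) :
    (S.card : ℝ) ^ (1 - 1 / ((m : ℝ) - 1)) * (Fintype.card G : ℝ) ^ (1 / ((m : ℝ) - 1))
      ≤ ((S + subsetSums B).card : ℝ) := by
  have hPR := Finset.pluennecke_ruzsa_inequality_nsmul_add hS (subsetSums B) (m - 1)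
  rw [nsmul_subsetSums_eq_univ m hm hm2 B hB, Finset.card_univ] at hPR
  set t := m - 1 with ht
  set s : ℝ := (S.card : ℝ) with hsdef
  set K : ℝ := ((S + subsetSums B).card : ℝ) with hKdef
  set N : ℝ := (Fintype.card G : ℝ) with hNdef
  have hs0 : 0 < s := by rw [hsdef]; exact_mod_cast hS.card_pos
  have hKne : (S + subsetSums B).Nonempty := by
    refine hS.add ⟨0, ?_⟩
    have := mem_subsetSums (Finset.empty_subset B)
    simpa using this
  have hK0 : 0 < K := by rw [hKdef]; exact_mod_cast hKne.card_pos
  have hN0 : 0 ≤ N := by positivity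
  have hmain : N ≤ (K / s) ^ t * s := by
    have h2 := (NNRat.cast_le (K := ℝ)).2 hPR
    push_cast at h2
    exact h2
  set e : ℝ := 1 / ((m : ℝ) - 1) with he
  have hme : (m : ℝ) - 1 = (t : ℝ) := by
    rw [ht, Nat.cast_sub (by omega)]
    norm_num
  have ht0 : (0 : ℝ) < (t : ℝ) := by
    have : 1 ≤ t := by omega
    exact_mod_cast Nat.lt_of_lt_of_le Nat.zero_lt_one this
  have he0 : 0 < e := by rw [he, hme]; positivity
  have hte : (t : ℝ) * e = 1 := by
    rw [he, hme]
    field_simp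
  have step : N ^ e ≤ (K / s) * s ^ e := by
    calc N ^ e ≤ ((K / s) ^ t * s) ^ e :=
          Real.rpow_le_rpow hN0 hmain he0.le
      _ = ((K / s) ^ (t : ℝ)) ^ e * s ^ e := by
          rw [Real.mul_rpow (by positivity) hs0.le, Real.rpow_natCast]
      _ = (K / s) ^ ((t : ℝ) * e) * s ^ e := by
          rw [← Real.rpow_mul (by positivity)]
      _ = (K / s) * s ^ e := by rw [hte, Real.rpow_one]
  calc s ^ (1 - e) * N ^ e ≤ s ^ (1 - e) * ((K / s) * s ^ e) := by
        have : (0:ℝ) ≤ s ^ (1 - e) := by positivity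
        exact mul_le_mul_of_nonneg_left step this
    _ = K / s * (s ^ (1 - e) * s ^ e) := by ring
    _ = K / s * s := by rw [← Real.rpow_add hs0]; norm_num
    _ = K := div_mul_cancel₀ K hs0.ne'
end

section
/- For any finite non-empty subsets A and B of an abelian group, |A + B| ≥ |A|²|B|² / √(T(A)·T(B)), where T(X) = |{(x₁,x₂,x₃,x₄) ∈ X⁴ : x₁ + x₂ = x₃ + x₄}| counts additive quadruples. -/
open Finset Pointwise

/-- The number of additive quadruples of `X`: tuples `(x₁,x₂,x₃,x₄) ∈ X⁴`
with `x₁ + x₂ = x₃ + x₄`. -/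
def addQuadruples {G : Type*} [AddCommGroup G] [DecidableEq G] (X : Finset G) : ℕ :=
  (((X ×ˢ X) ×ˢ (X ×ˢ X)).filter fun p => p.1.1 + p.1.2 = p.2.1 + p.2.2).card

/-!
Counting the pairs of `A × B` by their sums and applying Cauchy–Schwarz gives
`|A|²|B|² ≤ |A + B| E(A, B)`, where `E(A, B)` is the additive energy. Since
`a + b = a' + b'` iff `a - a' = b' - b`, the energy is `E(A, B) = ∑_d r_A(d) r_B(d)` with
`r_X(d)` the number of representations `d = x - x'`, so a second Cauchy–Schwarz gives
`E(A, B)² ≤ E(A, A) E(B, B)`; finally `T(X) = E(X, X)`.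
-/

open scoped Combinatorics.Additive Pointwise

namespace Finset

variable {G : Type*} [AddCommGroup G] [DecidableEq G]

def subCount (s : Finset G) (d : G) : ℕ := #{x ∈ s ×ˢ s | x.1 - x.2 = d}

lemma card_filter_sub_swap_eq_subCount (s : Finset G) (d : G) :
    #{x ∈ s ×ˢ s | x.2 - x.1 = d} = s.subCount d :=
  card_equiv (Equiv.prodComm G G) fun x => by simp [and_comm]

lemma addEnergy_eq_sum_subCount_mul {s u : Finset G} (t : Finset G) (hu : s - s ⊆ u) :
    E[s, t] = ∑ d ∈ u, s.subCount d * t.subCount d := by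
  have hmaps : ∀ x ∈ {x ∈ (s ×ˢ s) ×ˢ t ×ˢ t | x.1.1 + x.2.1 = x.1.2 + x.2.2},
      x.1.1 - x.1.2 ∈ u := by
    intro x hx
    simp only [mem_filter, mem_product] at hx
    exact hu (sub_mem_sub hx.1.1.1 hx.1.1.2)
  rw [addEnergy, card_eq_sum_card_fiberwise hmaps]
  refine sum_congr rfl fun d _ => ?_
  rw [subCount, ← card_filter_sub_swap_eq_subCount t, ← card_product, ← filter_product,
    filter_filter]
  refine congrArg card (filter_congr fun x _ => ?_)
  grind

lemma addEnergy_sq_le_addEnergy_mul_addEnergy (s t : Finset G) : E[s, t] ^ 2 ≤ E[s] * E[t] := by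
  have hs : s - s ⊆ (s - s) ∪ (t - t) := subset_union_left
  have ht : t - t ⊆ (s - s) ∪ (t - t) := subset_union_right
  rw [addEnergy_eq_sum_subCount_mul t hs, addEnergy_eq_sum_subCount_mul s hs,
    addEnergy_eq_sum_subCount_mul t ht]
  simpa only [sq] using sum_mul_sq_le_sq_mul_sq _ s.subCount t.subCount

end Finset

lemma addQuadruples_eq_addEnergy {G : Type*} [AddCommGroup G] [DecidableEq G] (X : Finset G) :
    addQuadruples X = E[X] :=
  (addEnergy_eq_card_filter X X).symm

theorem stmt10_general {G : Type*} [AddCommGroup G] [DecidableEq G]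
    (A B : Finset G) :
    (A.card : ℝ) ^ 2 * (B.card : ℝ) ^ 2
        / Real.sqrt ((addQuadruples A : ℝ) * (addQuadruples B : ℝ))
      ≤ ((A + B).card : ℝ) := by
  have hsumset : (#A : ℝ) ^ 2 * #B ^ 2 ≤ #(A + B) * E[A, B] := by
    exact_mod_cast le_card_add_mul_addEnergy A B
  have henergy : (E[A, B] : ℝ) ≤ √(addQuadruples A * addQuadruples B) := by
    rw [addQuadruples_eq_addEnergy, addQuadruples_eq_addEnergy]
    refine Real.le_sqrt_of_sq_le ?_
    exact_mod_cast addEnergy_sq_le_addEnergy_mul_addEnergy A B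
  exact div_le_of_le_mul₀ (Real.sqrt_nonneg _) (Nat.cast_nonneg _)
    (hsumset.trans (by gcongr))

theorem stmt10 {G : Type*} [AddCommGroup G] [DecidableEq G]
    (A B : Finset G) (hA : A.Nonempty) (hB : B.Nonempty) :
    (A.card : ℝ) ^ 2 * (B.card : ℝ) ^ 2
        / Real.sqrt ((addQuadruples A : ℝ) * (addQuadruples B : ℝ))
      ≤ ((A + B).card : ℝ) :=
  stmt10_general A B
end

section
/- Let k ≥ 2, r ≥ 1 be integers, p a prime, and let Λ ≤ ℤ^{kr} be the lattice of all integer vectors (z₁₁,…,z_{kr}) satisfying z_{1j} + z_{2j} + ⋯ + z_{kj} ≡ 0 (mod p) for each j = 1,…,r. Then the covering number C(Λ) = min{|S| : S ⊆ ℤ^{kr}, {0,1}^{kr} ⊆ S + Λ} equals min{(k+1)^r, p^r}. -/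
open Finset

/-- The vertices of the unit cube in `ℤ^{kr}`. -/
def cubeVertices (k r : ℕ) : Set (Fin k → Fin r → ℤ) :=
  {z | ∀ i j, z i j = 0 ∨ z i j = 1}

/-- The covering number of a lattice `Λ ≤ ℤ^{kr}`: the minimal number of translates of `Λ`
whose union contains all vertices of the unit cube. -/
noncomputable def coveringNumber {k r : ℕ} (Λ : AddSubgroup (Fin k → Fin r → ℤ)) : ℕ :=
  sInf {n : ℕ | ∃ S : Finset (Fin k → Fin r → ℤ), S.card = n ∧
    ∀ v ∈ cubeVertices k r, ∃ s ∈ S, v - s ∈ Λ}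

/-!
The lattice is the kernel of the column-sum map `ℤ^{k×r} → (ℤ/p)^r`, and for the kernel of any
homomorphism into a finite group, two vertices lie in the same translate exactly when they have the
same image; so the covering number is the number of images of cube vertices. A 0/1 column of
length `k` can have any sum in `{0, …, k}`, so the images form the box `A^r`, where `A` is the
image of `{0, …, k}` in `ℤ/p`, of size `min (k + 1) p`.
-/

theorem coveringNumber_ker {k r : ℕ} {H : Type*} [AddGroup H] [Finite H]
    (φ : (Fin k → Fin r → ℤ) →+ H) :
    coveringNumber φ.ker = (φ '' cubeVertices k r).ncard := by
  have mem_ker_sub (v s) : v - s ∈ φ.ker ↔ φ s = φ v := by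
    rw [AddMonoidHom.mem_ker, map_sub, sub_eq_zero, eq_comm]
  refine IsLeast.csInf_eq ⟨?_, ?_⟩
  · obtain ⟨T, -, hbij⟩ := Set.exists_subset_bijOn (cubeVertices k r) φ
    have hTfin : T.Finite := Set.Finite.of_finite_image (Set.toFinite _) hbij.injOn
    refine ⟨hTfin.toFinset, ?_, fun v hv => ?_⟩
    · rw [← Set.ncard_eq_toFinset_card T hTfin, ← hbij.image_eq,
        hbij.injOn.ncard_image]
    · obtain ⟨s, hs, hsv⟩ := hbij.surjOn (Set.mem_image_of_mem φ hv)
      exact ⟨s, hTfin.mem_toFinset.mpr hs, (mem_ker_sub v s).mpr hsv⟩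
  · rintro _ ⟨S, rfl, hS⟩
    have hcover : φ '' cubeVertices k r ⊆ φ '' S := by
      rintro _ ⟨v, hv, rfl⟩
      obtain ⟨s, hs, hvs⟩ := hS v hv
      exact ⟨s, hs, (mem_ker_sub v s).mp hvs⟩
    calc (φ '' cubeVertices k r).ncard ≤ (φ '' S).ncard := Set.ncard_le_ncard hcover
      _ ≤ (S : Set (Fin k → Fin r → ℤ)).ncard := Set.ncard_image_le S.finite_toSet
      _ = #S := Set.ncard_coe_finset S

theorem sum_ite_val_lt {k m : ℕ} (hm : m ≤ k) :
    ∑ i : Fin k, (if (i : ℕ) < m then 1 else 0 : ℤ) = m := by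
  rw [sum_boole, Fin.card_filter_val_lt, min_eq_right hm]

theorem image_sum_binary (k : ℕ) :
    (fun x : Fin k → ℤ => ∑ i, x i) '' {x | ∀ i, x i = 0 ∨ x i = 1} = Nat.cast '' Set.Iic k := by
  ext n
  constructor
  · rintro ⟨x, hx, rfl⟩
    have hsum : ∑ i, x i = ∑ i, (if x i = 1 then 1 else 0 : ℤ) :=
      sum_congr rfl fun i _ => by rcases hx i with h | h <;> simp [h]
    refine ⟨#{i | x i = 1}, ?_, by simp only [hsum, sum_boole]⟩
    simpa using card_filter_le univ fun i => x i = 1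
  · rintro ⟨m, hm, rfl⟩
    exact ⟨fun i => if (i : ℕ) < m then 1 else 0, fun i => by dsimp only; split_ifs <;> simp,
      sum_ite_val_lt hm⟩

theorem card_image_natCast_Iic (k p : ℕ) [NeZero p] :
    ((Iic k).image (Nat.cast : ℕ → ZMod p)).card = min (k + 1) p := by
  rcases lt_or_ge k p with hkp | hpk
  · have hinj : Set.InjOn (Nat.cast : ℕ → ZMod p) (Iic k) := fun a ha b hb hab => by
      have ha : a < p := (mem_Iic.mp ha).trans_lt hkp
      have hb : b < p := (mem_Iic.mp hb).trans_lt hkp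
      rw [← ZMod.val_cast_of_lt ha, ← ZMod.val_cast_of_lt hb, hab]
    rw [card_image_of_injOn hinj, Nat.card_Iic, min_eq_left hkp]
  · have huniv : (Iic k).image (Nat.cast : ℕ → ZMod p) = univ :=
      eq_univ_of_forall fun x => mem_image.mpr
        ⟨x.val, mem_Iic.mpr (x.val_lt.le.trans hpk), ZMod.natCast_zmod_val x⟩
    rw [huniv, card_univ, ZMod.card, min_eq_right (Nat.le_succ_of_le hpk)]

section ColumnSum

variable {k r : ℕ} (p : ℕ)

def columnSumMod : (Fin k → Fin r → ℤ) →+ (Fin r → ZMod p) where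
  toFun v j := ((∑ i, v i j : ℤ) : ZMod p)
  map_zero' := by ext; simp
  map_add' v w := by ext; simp [sum_add_distrib]

theorem columnSumMod_apply (v : Fin k → Fin r → ℤ) (j : Fin r) :
    columnSumMod p v j = ((∑ i, v i j : ℤ) : ZMod p) := rfl

variable {p}

theorem mem_ker_columnSumMod {v : Fin k → Fin r → ℤ} :
    v ∈ (columnSumMod p).ker ↔ ∀ j, (p : ℤ) ∣ ∑ i, v i j := by
  simp only [AddMonoidHom.mem_ker, funext_iff, Pi.zero_apply, ← ZMod.intCast_zmod_eq_zero_iff_dvd]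
  rfl

theorem image_columnSumMod_cubeVertices :
    columnSumMod p '' cubeVertices k r =
      Set.univ.pi fun _ : Fin r => Nat.cast '' Set.Iic k := by
  have hcol := image_sum_binary (k := k)
  ext f
  constructor
  · rintro ⟨v, hv, rfl⟩ j _
    obtain ⟨m, hm, hmv⟩ : ∑ i, v i j ∈ Nat.cast '' Set.Iic k :=
      hcol ▸ ⟨fun i => v i j, fun i => hv i j, rfl⟩
    exact ⟨m, hm, by rw [columnSumMod_apply, ← hmv, Int.cast_natCast]⟩
  · intro hf
    choose m hm hmf using fun j => hf j trivial
    choose x hx hxm using fun j => hcol.symm ▸ Set.mem_image_of_mem Nat.cast (hm j)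
    refine ⟨fun i j => x j i, fun i j => hx j i, funext fun j => ?_⟩
    rw [columnSumMod_apply, show ∑ i, x j i = m j from hxm j, Int.cast_natCast, hmf]

end ColumnSum

theorem stmt15_general (k r : ℕ) (p : ℕ) (hp : p.Prime)
    (Λ : AddSubgroup (Fin k → Fin r → ℤ))
    (hΛ : ∀ z, z ∈ Λ ↔ ∀ j, (p : ℤ) ∣ ∑ i, z i j) :
    coveringNumber Λ = min ((k + 1) ^ r) (p ^ r) := by
  have : NeZero p := ⟨hp.ne_zero⟩
  have hΛ_ker : Λ = (columnSumMod p).ker :=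
    AddSubgroup.ext fun z => (hΛ z).trans mem_ker_columnSumMod.symm
  have hpi : (Set.univ.pi fun _ : Fin r => (Nat.cast '' Set.Iic k : Set (ZMod p))) =
      ↑(Fintype.piFinset fun _ : Fin r => (Iic k).image (Nat.cast : ℕ → ZMod p)) := by
    simp [Fintype.coe_piFinset]
  rw [hΛ_ker, coveringNumber_ker, image_columnSumMod_cubeVertices, hpi, Set.ncard_coe_finset,
    Fintype.card_piFinset_const, card_image_natCast_Iic]
  exact (pow_left_mono r).map_min

theorem stmt15 (k r : ℕ) (hk : 2 ≤ k) (hr : 1 ≤ r) (p : ℕ) (hp : p.Prime)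
    (Λ : AddSubgroup (Fin k → Fin r → ℤ))
    (hΛ : ∀ z, z ∈ Λ ↔ ∀ j, (p : ℤ) ∣ ∑ i, z i j) :
    coveringNumber Λ = min ((k + 1) ^ r) (p ^ r) :=
  stmt15_general k r p hp Λ hΛ
end

section
/- Let r, n ≥ 1 and k ≥ 2 be integers, F a field with |F| ≥ k, and L₁,…,L_k matrices of size r × n over F such that for each i ∈ [1,k], the intersection ⋂_{j ≠ i} ker L_j is contained in ker L_i. Then there exist invertible r × r matrices B₁,…,B_k ∈ GL_r(F) with B₁L₁ + ⋯ + B_kL_k = 0. -/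
open Matrix Submodule Module


theorem cover_aux {F V : Type*} [Field F] [AddCommGroup V] [Module F V]
    (S : Finset (Submodule F V)) (hcard : (S.card : Cardinal) ≤ Cardinal.mk F)
    (hS : ∀ p ∈ S, p ≠ ⊤) : ∃ v : V, ∀ p ∈ S, v ∉ p := by
  classical
  induction S using Finset.induction_on with
  | empty => exact ⟨0, by simp⟩
  | @insert q S' hq ih =>
    have hins : (insert q S').card = S'.card + 1 := Finset.card_insert_of_notMem hq
    have hcard' : ((S'.card : ℕ) : Cardinal) ≤ Cardinal.mk F :=
      le_trans (Nat.cast_le.mpr (by omega)) hcard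
    obtain ⟨v, hv⟩ := ih hcard' (fun p hp => hS p (Finset.mem_insert_of_mem hp))
    by_cases hvq : v ∈ q
    · have hqt : q ≠ ⊤ := hS q (Finset.mem_insert_self q S')
      obtain ⟨u, hu⟩ : ∃ u, u ∉ q := by
        by_contra h; push_neg at h
        exact hqt (Submodule.eq_top_iff'.mpr h)
      set g : Submodule F V → F := fun p =>
        if h : ∃ c : F, u + c • v ∈ p then h.choose else 0 with hg
      set Bad : Finset F := S'.image g with hBad
      obtain ⟨c, hc⟩ : ∃ c : F, c ∉ Bad := by
        by_contra h; push_neg at h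
        have : Cardinal.mk F = (Bad.card : ℕ) := by
          rw [← Cardinal.mk_coe_finset]
          exact Cardinal.mk_congr (Equiv.subtypeUnivEquiv h).symm
        have h3 : (((insert q S').card : ℕ) : Cardinal) ≤ ((S'.card : ℕ) : Cardinal) := by
          rw [this] at hcard
          exact le_trans hcard (Nat.cast_le.mpr (le_trans (Finset.card_image_le) le_rfl))
        exact absurd (Nat.cast_le.mp h3) (by omega)
      refine ⟨u + c • v, ?_⟩
      intro p hp
      rcases Finset.mem_insert.mp hp with rfl | hp'
      · intro hmem
        exact hu (by simpa using p.sub_mem hmem (p.smul_mem c hvq))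
      · intro hmem
        have hex : ∃ c' : F, u + c' • v ∈ p := ⟨c, hmem⟩
        have hg0 : u + (g p) • v ∈ p := by
          simp only [hg, dif_pos hex]; exact hex.choose_spec
        have hne : c ≠ g p := by
          intro h; exact hc (Finset.mem_image.mpr ⟨p, hp', h.symm⟩)
        have hsub : (c - g p) • v ∈ p := by
          have := p.sub_mem hmem hg0
          simpa [sub_smul, add_sub_add_left_eq_sub] using this
        have hvp : v ∈ p := by
          have h2 := p.smul_mem (c - g p)⁻¹ hsub
          rwa [smul_smul, inv_mul_cancel₀ (sub_ne_zero_of_ne hne), one_smul] at h2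
        exact hv p hp' hvp
    · refine ⟨v, fun p hp => ?_⟩
      rcases Finset.mem_insert.mp hp with rfl | hp'
      · exact hvq
      · exact hv p hp'

theorem extend_aux {F V : Type*} [Field F] [AddCommGroup V] [Module F V]
    [FiniteDimensional F V] {ι : Type*} [Fintype ι] [Nonempty ι]
    (hcard : (Fintype.card ι : Cardinal) ≤ Cardinal.mk F)
    (p : ι → Submodule F V) (s : ℕ) (hs : ∀ i, finrank F (p i) = s) :
    ∀ (d : ℕ) (K : Submodule F V), (∀ i, K ⊓ p i = ⊥) →
      finrank F V - s - finrank F K ≤ d →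
      ∃ K', K ≤ K' ∧ (∀ i, K' ⊓ p i = ⊥) ∧ finrank F K' = finrank F V - s := by
  classical
  intro d
  induction d with
  | zero =>
    intro K hK hd
    refine ⟨K, le_rfl, hK, ?_⟩
    obtain ⟨i₀⟩ := ‹Nonempty ι›
    have h1 : finrank F ↥(K ⊔ p i₀) + finrank F ↥(K ⊓ p i₀) = finrank F K + finrank F ↥(p i₀) :=
      Submodule.finrank_sup_add_finrank_inf_eq K (p i₀)
    rw [hK i₀, finrank_bot, hs i₀, add_zero] at h1
    have h2 : finrank F ↥(K ⊔ p i₀) ≤ finrank F V := Submodule.finrank_le _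
    omega
  | succ d ih =>
    intro K hK hd
    by_cases heq : finrank F V - s - finrank F K = 0
    · exact ih K hK (by omega)
    · -- finrank K < finrank V - s; find v outside all K ⊔ p i
      obtain ⟨i₀⟩ := ‹Nonempty ι›
      have hsle : s ≤ finrank F V := by rw [← hs i₀]; exact Submodule.finrank_le _
      have hsup : ∀ i, finrank F ↥(K ⊔ p i) = finrank F K + s := by
        intro i
        have h1 := Submodule.finrank_sup_add_finrank_inf_eq K (p i)
        rw [hK i, finrank_bot, hs i, add_zero] at h1
        exact h1
      have hne : ∀ i, K ⊔ p i ≠ ⊤ := by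
        intro i h
        have := hsup i
        rw [h, finrank_top] at this
        omega
      obtain ⟨v, hv⟩ := cover_aux (Finset.image (fun i => K ⊔ p i) Finset.univ)
        (le_trans (Nat.cast_le.mpr (le_trans Finset.card_image_le (by simp))) hcard)
        (by
          rintro q hq
          obtain ⟨i, -, rfl⟩ := Finset.mem_image.mp hq
          exact hne i)
      have hv' : ∀ i, v ∉ K ⊔ p i := fun i =>
        hv _ (Finset.mem_image.mpr ⟨i, Finset.mem_univ _, rfl⟩)
      have hvK : v ∉ K := fun h => hv' i₀ (Submodule.mem_sup_left h)
      have hv0 : v ≠ 0 := fun h => hvK (h ▸ K.zero_mem)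
      set K' := K ⊔ Submodule.span F {v} with hK'
      have hKK' : K ≤ K' := le_sup_left
      have hinf : ∀ i, K' ⊓ p i = ⊥ := by
        intro i
        rw [Submodule.eq_bot_iff]
        rintro w ⟨hw1, hw2⟩
        obtain ⟨x, hx, y, hy, rfl⟩ := Submodule.mem_sup.mp hw1
        obtain ⟨c, rfl⟩ := Submodule.mem_span_singleton.mp hy
        by_cases hc : c = 0
        · subst hc
          have hmem : x + (0:F) • v ∈ K ⊓ p i := ⟨by simpa using hx, hw2⟩
          rw [hK i] at hmem
          simpa using hmem
        · exfalso
          have : v = c⁻¹ • ((x + c • v) - x) := by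
            rw [add_sub_cancel_left, smul_smul, inv_mul_cancel₀ hc, one_smul]
          apply hv' i
          rw [this]
          exact Submodule.smul_mem _ _ (Submodule.sub_mem _
            (Submodule.mem_sup_right hw2) (Submodule.mem_sup_left hx))
      have hKspan : K ⊓ Submodule.span F {v} = ⊥ := by
        rw [Submodule.eq_bot_iff]
        rintro w ⟨hw1, hw2⟩
        obtain ⟨c, rfl⟩ := Submodule.mem_span_singleton.mp hw2
        by_cases hc : c = 0
        · simp [hc]
        · exfalso
          apply hvK
          have := K.smul_mem c⁻¹ hw1
          rwa [smul_smul, inv_mul_cancel₀ hc, one_smul] at this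
      have hrank : finrank F K' = finrank F K + 1 := by
        have h1 := Submodule.finrank_sup_add_finrank_inf_eq K (Submodule.span F {v})
        rw [hKspan, finrank_bot, finrank_span_singleton hv0] at h1
        simpa [hK'] using h1
      obtain ⟨K'', h1, h2, h3⟩ := ih K' hinf (by rw [hrank]; omega)
      exact ⟨K'', le_trans hKK' h1, h2, h3⟩

theorem stmt18 (r n k : ℕ) (hr : 1 ≤ r) (hn : 1 ≤ n) (hk : 2 ≤ k)
    {F : Type*} [Field F] (hF : (k : Cardinal) ≤ Cardinal.mk F)
    (L : Fin k → Matrix (Fin r) (Fin n) F)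
    (hL : ∀ i : Fin k, ∀ x : Fin n → F,
      (∀ j, j ≠ i → (L j).mulVec x = 0) → (L i).mulVec x = 0) :
    ∃ B : Fin k → Matrix (Fin r) (Fin r) F,
      (∀ i, IsUnit (B i)) ∧ (∑ i, B i * L i) = 0 := by
  classical
  haveI : Nonempty (Fin k) := ⟨⟨0, by omega⟩⟩
  set incl : ∀ _ : Fin k, (Fin r → F) →ₗ[F] (Fin k → Fin r → F) :=
    fun i => LinearMap.single F (fun _ : Fin k => Fin r → F) i with hincl
  have hincl_apply : ∀ i x, incl i x = Pi.single i x := fun i x => rfl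
  have hincl_inj : ∀ i, Function.Injective (incl i) := by
    intro i x y hxy
    have h0 := congrFun hxy i
    rw [hincl_apply, hincl_apply, Pi.single_eq_same, Pi.single_eq_same] at h0
    exact h0
  set slot : Fin k → Submodule F (Fin k → Fin r → F) := fun i => LinearMap.range (incl i)
    with hslot
  set Φ : (Fin n → F) →ₗ[F] (Fin k → Fin r → F) := LinearMap.pi (fun i => (L i).mulVecLin)
    with hΦ
  have hΦ_apply : ∀ x i, Φ x i = (L i).mulVec x := fun x i => rfl
  set W : Submodule F (Fin k → Fin r → F) := LinearMap.range Φ with hW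
  have hWslot : ∀ i, W ⊓ slot i = ⊥ := by
    intro i
    rw [Submodule.eq_bot_iff]
    rintro w ⟨⟨x, rfl⟩, ⟨y, hy⟩⟩
    have hj : ∀ j, j ≠ i → (L j).mulVec x = 0 := by
      intro j hj
      have h0 := congrFun hy j
      rw [hincl_apply, Pi.single_eq_of_ne hj, hΦ_apply] at h0
      exact h0.symm
    have hi := hL i x hj
    funext j
    by_cases h : j = i
    · subst h; rw [hΦ_apply]; exact hi
    · rw [hΦ_apply]; exact hj j h
  have hslotrank : ∀ i, finrank F (slot i) = r := by
    intro i
    show finrank F (LinearMap.range (incl i)) = r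
    rw [LinearEquiv.finrank_eq (LinearEquiv.ofInjective (incl i) (hincl_inj i)).symm,
      finrank_fintype_fun_eq_card, Fintype.card_fin]
  have hVrank : finrank F (Fin k → Fin r → F) = k * r := by
    rw [finrank_pi_fintype]
    simp [finrank_fintype_fun_eq_card, Finset.sum_const, mul_comm]
  have hcard : ((Fintype.card (Fin k) : ℕ) : Cardinal) ≤ Cardinal.mk F := by
    simpa using hF
  obtain ⟨K, hWK, hKslot, hKrank⟩ :=
    extend_aux hcard slot r hslotrank
      (finrank F (Fin k → Fin r → F) - r - finrank F W) W hWslot le_rfl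
  have hKrank' : finrank F K = k * r - r := by rw [hKrank, hVrank]
  have hQrank : finrank F ((Fin k → Fin r → F) ⧸ K) = r := by
    have h1 := Submodule.finrank_quotient_add_finrank K
    rw [hKrank', hVrank] at h1
    have hrk : r ≤ k * r := Nat.le_mul_of_pos_left r (by omega)
    omega
  set q : ∀ _ : Fin k, (Fin r → F) →ₗ[F] ((Fin k → Fin r → F) ⧸ K) :=
    fun i => (K.mkQ).comp (incl i) with hq
  have hq_apply : ∀ i x, q i x = K.mkQ (incl i x) := fun i x => rfl
  have hqinj : ∀ i, Function.Injective (q i) := by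
    intro i
    rw [← LinearMap.ker_eq_bot, Submodule.eq_bot_iff]
    intro x hx
    have hx0 : K.mkQ (incl i x) = 0 := hx
    have hmem : incl i x ∈ K := by
      rwa [Submodule.mkQ_apply, Submodule.Quotient.mk_eq_zero] at hx0
    have h2 : incl i x ∈ K ⊓ slot i := ⟨hmem, ⟨x, rfl⟩⟩
    rw [hKslot i] at h2
    exact hincl_inj i (by simpa using (Submodule.mem_bot F).mp h2)
  have hdim : finrank F (Fin r → F) = finrank F ((Fin k → Fin r → F) ⧸ K) := by
    rw [hQrank, finrank_fintype_fun_eq_card, Fintype.card_fin]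
  set e : ∀ _ : Fin k, (Fin r → F) ≃ₗ[F] ((Fin k → Fin r → F) ⧸ K) :=
    fun i => (q i).linearEquivOfInjective (hqinj i) hdim with he
  have he_apply : ∀ i x, e i x = q i x := fun i x =>
    LinearMap.linearEquivOfInjective_apply (hqinj i) hdim x
  set i₀ : Fin k := ⟨0, by omega⟩ with hi₀
  set f : ∀ _ : Fin k, (Fin r → F) →ₗ[F] (Fin r → F) :=
    fun i => ((e i₀).symm.toLinearMap).comp (q i) with hf
  have hf_apply : ∀ i x, f i x = (e i₀).symm (q i x) := fun i x => rfl
  refine ⟨fun i => LinearMap.toMatrix' (f i), ?_, ?_⟩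
  · intro i
    set g : (Fin r → F) ≃ₗ[F] (Fin r → F) := (e i).trans (e i₀).symm with hg
    have hfg : f i = g.toLinearMap := by
      apply LinearMap.ext
      intro x
      rw [hf_apply, ← he_apply]
      rfl
    have hc1 : (↑g : (Fin r → F) →ₗ[F] (Fin r → F)) ∘ₗ ↑g.symm = LinearMap.id := by
      apply LinearMap.ext; intro x; simp
    have hc2 : (↑g.symm : (Fin r → F) →ₗ[F] (Fin r → F)) ∘ₗ ↑g = LinearMap.id := by
      apply LinearMap.ext; intro x; simp
    rw [isUnit_iff_exists]
    refine ⟨LinearMap.toMatrix' g.symm.toLinearMap, ?_, ?_⟩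
    · show LinearMap.toMatrix' (f i) * _ = 1
      rw [hfg, ← LinearMap.toMatrix'_comp, hc1, LinearMap.toMatrix'_id]
    · show _ * LinearMap.toMatrix' (f i) = 1
      rw [hfg, ← LinearMap.toMatrix'_comp, hc2, LinearMap.toMatrix'_id]
  · apply Matrix.toLin'.injective
    rw [map_sum, map_zero]
    apply LinearMap.ext
    intro x
    simp only [LinearMap.coe_sum, Finset.sum_apply, LinearMap.zero_apply]
    have hterm : ∀ i : Fin k,
        (Matrix.toLin' (LinearMap.toMatrix' (f i) * L i)) x = f i ((L i).mulVec x) := by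
      intro i
      rw [Matrix.toLin'_mul, LinearMap.comp_apply]
      rw [Matrix.toLin'_toMatrix', Matrix.toLin'_apply]
    rw [Finset.sum_congr rfl (fun i _ => hterm i)]
    have hstep : ∑ i, f i ((L i).mulVec x)
        = (e i₀).symm (K.mkQ (∑ i, incl i ((L i).mulVec x))) := by
      rw [map_sum, map_sum]
      exact Finset.sum_congr rfl (fun i _ => by rw [hf_apply, hq_apply])
    rw [hstep]
    have hsum : (∑ i, incl i ((L i).mulVec x)) = Φ x := by
      funext j
      rw [Finset.sum_apply]
      have h1 : ∀ i : Fin k, incl i ((L i).mulVec x) j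
          = (Pi.single i ((L i).mulVec x) : Fin k → Fin r → F) j :=
        fun i => by rw [hincl_apply]
      rw [Finset.sum_congr rfl (fun i _ => h1 i),
        Fintype.sum_pi_single j (fun i => (L i).mulVec x), hΦ_apply]
    rw [hsum]
    have hz : K.mkQ (Φ x) = 0 := by
      rw [Submodule.mkQ_apply, Submodule.Quotient.mk_eq_zero]
      exact hWK ⟨x, rfl⟩
    rw [hz, map_zero]
end

section
/- Let r ≥ 1 and k ≥ 1 be integers and let A_{ij} (i, j ∈ [1,k]) be r × r matrices over a field F with |F| ≥ k such that each diagonal matrix A_{ii} is invertible. Then there exist r × r matrices M₁,…,M_k over F such that for every j ∈ [1,k], the matrix M₁A_{1j} + M₂A_{2j} + ⋯ + M_kA_{kj} is invertible. -/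
/-!
Let `Φ j : F^r → F^{kr}` be `x ↦ (A i j *ᵥ x)ᵢ`, injective because `A j j` is. If
`L : F^{kr} → F^r` is linear and `M i` is the matrix of `L` on the `i`-th block, then
`∑ i, M i * A i j` is the matrix of `L ∘ Φ j`, so it suffices that `L` be injective on each of
the `k` subspaces `range (Φ j)`. Take for `L` the quotient map by a subspace `W` of codimension `r`
meeting every `range (Φ j)` trivially; `W` is grown one vector at a time, each time avoiding
`k ≤ |F|` proper subspaces. That is possible because a subspace not containing both `v` and `w`
meets the line `v + t • w` in at most one point, and when `w` lies in one of the subspaces the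
line only has to avoid the other `k - 1` of them.
-/

open Cardinal Module Matrix

section

variable {ι K M : Type*} [Field K] [AddCommGroup M] [Module K M]

namespace Submodule

lemma mem_of_add_smul_mem_of_add_smul_mem {p : Submodule K M} {v w : M} {t t' : K}
    (h : v + t • w ∈ p) (h' : v + t' • w ∈ p) (hne : t ≠ t') : v ∈ p ∧ w ∈ p := by
  have hw : w ∈ p := by
    have : (t - t') • w ∈ p := by convert p.sub_mem h h' using 1; module
    exact (p.smul_mem_iff (sub_ne_zero.mpr hne)).mp this
  exact ⟨(p.add_mem_iff_left (p.smul_mem t hw)).mp h, hw⟩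

lemma exists_add_smul_forall_notMem (s : Finset ι) (p : ι → Submodule K M) {v w : M}
    (hvw : ∀ i ∈ s, v ∉ p i ∨ w ∉ p i) (hs : (s.card : Cardinal) < #K) :
    ∃ t : K, ∀ i ∈ s, v + t • w ∉ p i := by
  let g : ι → K := fun i => Classical.epsilon fun u => v + u • w ∈ p i
  have hg : ∀ i t, v + t • w ∈ p i → v + g i • w ∈ p i := fun _ t ht =>
    Classical.epsilon_spec (p := fun u => v + u • w ∈ p _) ⟨t, ht⟩
  obtain ⟨t, ht⟩ : ∃ t, t ∉ s.toList.map g :=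
    Cardinal.exists_notMem_of_length_lt _ (by simpa using hs)
  refine ⟨t, fun i hi hmem => ?_⟩
  have hgt : g i ≠ t := fun hgt =>
    ht (hgt ▸ List.mem_map_of_mem (Finset.mem_toList.mpr hi))
  obtain ⟨hvi, hwi⟩ := mem_of_add_smul_mem_of_add_smul_mem (hg i t hmem) hmem hgt
  exact (hvw i hi).elim (· hvi) (· hwi)

lemma exists_forall_notMem_of_card_le (s : Finset ι) (p : ι → Submodule K M)
    (hp : ∀ i, p i ≠ ⊤) (hs : (s.card : Cardinal) ≤ #K) :
    ∃ x, ∀ i ∈ s, x ∉ p i := by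
  classical
  rcases s.eq_empty_or_nonempty with rfl | ⟨j, hj⟩
  · exact ⟨0, by simp⟩
  have hcard_erase : ∀ i ∈ s, ((s.erase i).card : Cardinal) < #K := fun i hi =>
    lt_of_lt_of_le (by exact_mod_cast Finset.card_erase_lt_of_mem hi) hs
  obtain ⟨v, hv⟩ : ∃ v, ∀ i ∈ s.erase j, v ∉ p i := by
    have := iUnion_ssubset_of_forall_ne_top_of_card_lt (s.erase j) p hp
      (Cardinal.natCast_lt_toENat.mpr (hcard_erase j hj))
    simpa [Set.ssubset_univ_iff, Set.iUnion_eq_univ_iff] using this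
  obtain ⟨w, hwj⟩ := SetLike.exists_not_mem_of_ne_top (p j) (hp j)
  have hvw : ∀ i ∈ s, v ∉ p i ∨ w ∉ p i := fun i hi => by
    by_cases hij : i = j
    · exact .inr (hij ▸ hwj)
    · exact .inl (hv i (Finset.mem_erase.mpr ⟨hij, hi⟩))
  by_cases hw : ∃ i₀ ∈ s, w ∈ p i₀
  swap
  · exact ⟨w, fun i hi hwi => hw ⟨i, hi, hwi⟩⟩
  obtain ⟨i₀, hi₀, hwi₀⟩ := hw
  obtain ⟨t, ht⟩ := exists_add_smul_forall_notMem (s.erase i₀) p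
    (fun i hi => hvw i (Finset.mem_of_mem_erase hi)) (hcard_erase i₀ hi₀)
  refine ⟨v + t • w, fun i hi hmem => ?_⟩
  by_cases hii₀ : i = i₀
  · subst hii₀
    have hvi : v ∈ p i := ((p i).add_mem_iff_left ((p i).smul_mem t hwi₀)).mp hmem
    exact (hvw i hi).elim (· hvi) (· hwi₀)
  · exact ht i (Finset.mem_erase.mpr ⟨hii₀, hi⟩) hmem

lemma exists_finrank_eq_forall_disjoint [FiniteDimensional K M] [Fintype ι] [Nonempty ι]
    (hι : (Fintype.card ι : Cardinal) ≤ #K) (p : ι → Submodule K M) {r : ℕ}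
    (hp : ∀ i, finrank K (p i) ≤ r) :
    ∀ m, m + r ≤ finrank K M →
      ∃ W : Submodule K M, finrank K W = m ∧ ∀ i, Disjoint W (p i)
  | 0, _ => ⟨⊥, finrank_bot K M, fun _ => disjoint_bot_left⟩
  | m + 1, hm => by
    obtain ⟨W, hWm, hW⟩ := exists_finrank_eq_forall_disjoint hι p hp m (by omega)
    have hsup : ∀ i, p i ⊔ W ≠ ⊤ := fun i htop => by
      have := finrank_add_le_finrank_add_finrank (p i) W
      rw [htop, finrank_top] at this
      have := hp i
      omega
    obtain ⟨v, hv⟩ := exists_forall_notMem_of_card_le Finset.univ _ hsup (by simpa using hι)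
    have hvW : v ∉ W := fun h =>
      hv (Classical.arbitrary ι) (Finset.mem_univ _) (mem_sup_right h)
    refine ⟨W ⊔ span K {v}, by rw [finrank_sup_span_singleton hvW, hWm], fun i => ?_⟩
    exact ((hW i).symm.disjoint_sup_right_of_disjoint_sup_left
      (disjoint_span_singleton_of_notMem (hv i (Finset.mem_univ _)))).symm

end Submodule

lemma LinearMap.exists_forall_injective_comp [FiniteDimensional K M] [Fintype ι]
    {N : Type*} [AddCommGroup N] [Module K N] [FiniteDimensional K N]
    (hι : (Fintype.card ι : Cardinal) ≤ #K) (Φ : ι → N →ₗ[K] M)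
    (hΦ : ∀ i, Function.Injective (Φ i)) :
    ∃ L : M →ₗ[K] N, ∀ i, Function.Injective (L ∘ₗ Φ i) := by
  rcases isEmpty_or_nonempty ι with _ | _
  · exact ⟨0, isEmptyElim⟩
  have hNM : finrank K N ≤ finrank K M :=
    finrank_le_finrank_of_injective (hΦ (Classical.arbitrary ι))
  obtain ⟨W, hWrank, hW⟩ := Submodule.exists_finrank_eq_forall_disjoint hι
    (fun i => range (Φ i)) (fun i => (finrank_range_of_inj (hΦ i)).le)
    (finrank K M - finrank K N) (by omega)
  let e : (M ⧸ W) ≃ₗ[K] N := LinearEquiv.ofFinrankEq _ _ <| by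
    have := W.finrank_quotient_add_finrank
    omega
  refine ⟨e.toLinearMap ∘ₗ W.mkQ, fun i => (injective_iff_map_eq_zero _).mpr fun x hx => ?_⟩
  have hxW : Φ i x ∈ W := by simpa using hx
  exact (injective_iff_map_eq_zero _).mp (hΦ i) x
    (Submodule.disjoint_def.mp (hW i) _ hxW (mem_range_self _ x))

lemma Matrix.sum_toMatrix'_comp_single_mul_mulVec {R m n : Type*} [CommRing R] [Fintype ι]
    [DecidableEq ι] [Fintype m] [DecidableEq m]
    (L : (ι → m → R) →ₗ[R] n → R) (B : ι → Matrix m m R) (x : m → R) :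
    (∑ i, LinearMap.toMatrix' (L ∘ₗ LinearMap.single R (fun _ => m → R) i) * B i) *ᵥ x =
      L (fun i => B i *ᵥ x) := by
  simp [Matrix.sum_mulVec, ← Matrix.mulVec_mulVec, ← map_sum, Finset.univ_sum_single]

end

theorem stmt19_general (r k : ℕ)
    {F : Type*} [Field F] (hF : (k : Cardinal) ≤ Cardinal.mk F)
    (A : Fin k → Fin k → Matrix (Fin r) (Fin r) F)
    (hA : ∀ i, IsUnit (A i i)) :
    ∃ M : Fin k → Matrix (Fin r) (Fin r) F,
      ∀ j, IsUnit (∑ i, M i * A i j) := by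
  let Φ : Fin k → (Fin r → F) →ₗ[F] Fin k → Fin r → F := fun j =>
    LinearMap.pi fun i => (A i j).mulVecLin
  have hΦ : ∀ j, Function.Injective (Φ j) := fun j x y hxy =>
    mulVec_injective_iff_isUnit.mpr (hA j) (congr_fun hxy j)
  obtain ⟨L, hL⟩ := LinearMap.exists_forall_injective_comp (by simpa using hF) Φ hΦ
  refine ⟨fun i => LinearMap.toMatrix' (L ∘ₗ LinearMap.single F (fun _ => Fin r → F) i),
    fun j => ?_⟩
  rw [← mulVec_injective_iff_isUnit]
  convert hL j using 1
  ext x : 1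
  exact sum_toMatrix'_comp_single_mul_mulVec L (fun i => A i j) x

theorem stmt19 (r k : ℕ) (hr : 1 ≤ r) (hk : 1 ≤ k)
    {F : Type*} [Field F] (hF : (k : Cardinal) ≤ Cardinal.mk F)
    (A : Fin k → Fin k → Matrix (Fin r) (Fin r) F)
    (hA : ∀ i, IsUnit (A i i)) :
    ∃ M : Fin k → Matrix (Fin r) (Fin r) F,
      ∀ j, IsUnit (∑ i, M i * A i j) :=
  stmt19_general r k hF A hA
end
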